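/- Let X be a pointed metric space. The sets of the form U = ⋂_{n≥1} { f ∈ Lip₀(X) : Lip_{F_n}(f) ≤ λ_n }, where (F_n) is a sequence of finite subsets of X and (λ_n) is a sequence of positive real numbers tending to ∞, form a base of neighborhoods of zero in (Lip₀(X), τ_γ). -/

import Mathlib

open Filter Topology Set Pointwise

set_option linter.unusedSectionVars false
set_option linter.unusedVariables false

noncomputable section

namespace LipApprox

variable (X : Type*) [MetricSpace X] (x₀ : X)
variable (F : Type*) [NormedAddCommGroup F] [NormedSpace ℝ F]

/-- The Lipschitz maps `X → F` vanishing at the base point, as a submodule of `X → F`. -/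
def lip0Submodule : Submodule ℝ (X → F) where
  carrier := {f | (∃ K, LipschitzWith K f) ∧ f x₀ = 0}
  add_mem' := by
    rintro f g ⟨⟨Kf, hf⟩, hf0⟩ ⟨⟨Kg, hg⟩, hg0⟩
    exact ⟨⟨Kf + Kg, hf.add hg⟩, by simp [hf0, hg0]⟩
  zero_mem' := ⟨⟨0, LipschitzWith.const 0⟩, rfl⟩
  smul_mem' := by
    rintro c f ⟨⟨K, hf⟩, hf0⟩
    exact ⟨⟨‖c‖₊ * K, (lipschitzWith_smul c).comp hf⟩, by simp [hf0]⟩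

/-- The space `Lip₀(X, F)` of Lipschitz maps from `X` to `F` vanishing at the base point. -/
def lip0 : Type _ := ↥(lip0Submodule X x₀ F)

instance : AddCommGroup (lip0 X x₀ F) :=
  inferInstanceAs (AddCommGroup ↥(lip0Submodule X x₀ F))

instance : Module ℝ (lip0 X x₀ F) :=
  inferInstanceAs (Module ℝ ↥(lip0Submodule X x₀ F))

variable {X x₀ F}

/-- The underlying function of an element of `Lip₀(X, F)`. -/
def toFun' (f : lip0 X x₀ F) : X → F := f.1

lemma exists_lip (f : lip0 X x₀ F) : ∃ K, LipschitzWith K (toFun' f) := f.2.1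

lemma apply_base (f : lip0 X x₀ F) : toFun' f x₀ = 0 := f.2.2

lemma toFun'_add (f g : lip0 X x₀ F) : toFun' (f + g) = toFun' f + toFun' g := rfl
lemma toFun'_neg (f : lip0 X x₀ F) : toFun' (-f) = -toFun' f := rfl
lemma toFun'_smul (c : ℝ) (f : lip0 X x₀ F) : toFun' (c • f) = c • toFun' f := rfl
lemma toFun'_zero : toFun' (0 : lip0 X x₀ F) = 0 := rfl

variable (X x₀ F) in
/-- The Lipschitz norm of an element of `Lip₀(X, F)`. -/
def lipNorm (f : lip0 X x₀ F) : ℝ :=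
  ⨆ p : X × X, ‖toFun' f p.1 - toFun' f p.2‖ / dist p.1 p.2

lemma ratio_le (f : lip0 X x₀ F) {K : NNReal} (hK : LipschitzWith K (toFun' f))
    (p : X × X) : ‖toFun' f p.1 - toFun' f p.2‖ / dist p.1 p.2 ≤ K := by
  rcases eq_or_ne p.1 p.2 with h | h
  · simp [h]
  · rw [div_le_iff₀ (dist_pos.2 h), ← dist_eq_norm]
    exact hK.dist_le_mul p.1 p.2

lemma bddAbove_ratio (f : lip0 X x₀ F) :
    BddAbove (Set.range fun p : X × X =>
      ‖toFun' f p.1 - toFun' f p.2‖ / dist p.1 p.2) := by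
  obtain ⟨K, hK⟩ := exists_lip f
  exact ⟨K, by rintro r ⟨p, rfl⟩; exact ratio_le f hK p⟩

lemma nonempty_pairs (x₀ : X) : Nonempty (X × X) := ⟨(x₀, x₀)⟩

lemma ratio_le_lipNorm (f : lip0 X x₀ F) (p : X × X) :
    ‖toFun' f p.1 - toFun' f p.2‖ / dist p.1 p.2 ≤ lipNorm X x₀ F f :=
  le_ciSup (bddAbove_ratio f) p

lemma lipNorm_nonneg (f : lip0 X x₀ F) : 0 ≤ lipNorm X x₀ F f := by
  have := ratio_le_lipNorm (x₀ := x₀) f (x₀, x₀)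
  simpa using this

lemma norm_sub_le_lipNorm (f : lip0 X x₀ F) (x y : X) :
    ‖toFun' f x - toFun' f y‖ ≤ lipNorm X x₀ F f * dist x y := by
  rcases eq_or_ne x y with rfl | h
  · simp
  · have := ratio_le_lipNorm (x₀ := x₀) f (x, y)
    rw [div_le_iff₀ (dist_pos.2 h)] at this
    simpa using this

instance : NormedAddCommGroup (lip0 X x₀ F) :=
  AddGroupNorm.toNormedAddCommGroup
    { toFun := lipNorm X x₀ F
      map_zero' := by
        haveI : Nonempty (X × X) := nonempty_pairs x₀
        have h0 : ∀ p : X × X,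
            ‖toFun' (0 : lip0 X x₀ F) p.1 - toFun' (0 : lip0 X x₀ F) p.2‖ /
              dist p.1 p.2 = 0 := by
          intro p; rw [toFun'_zero]; simp
        simp only [lipNorm, h0, ciSup_const]
      add_le' := by
        intro f g
        haveI : Nonempty (X × X) := nonempty_pairs x₀
        apply ciSup_le
        intro p
        rcases eq_or_ne p.1 p.2 with h | h
        · simp only [h, dist_self, div_zero]
          exact add_nonneg (lipNorm_nonneg f) (lipNorm_nonneg g)
        · have hnum : ‖toFun' (f + g) p.1 - toFun' (f + g) p.2‖ ≤
              ‖toFun' f p.1 - toFun' f p.2‖ + ‖toFun' g p.1 - toFun' g p.2‖ := by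
            rw [toFun'_add, Pi.add_apply, Pi.add_apply, add_sub_add_comm]
            exact norm_add_le _ _
          calc ‖toFun' (f + g) p.1 - toFun' (f + g) p.2‖ / dist p.1 p.2
              ≤ (‖toFun' f p.1 - toFun' f p.2‖ +
                  ‖toFun' g p.1 - toFun' g p.2‖) / dist p.1 p.2 := by gcongr
            _ = ‖toFun' f p.1 - toFun' f p.2‖ / dist p.1 p.2 +
                  ‖toFun' g p.1 - toFun' g p.2‖ / dist p.1 p.2 := add_div _ _ _
            _ ≤ lipNorm X x₀ F f + lipNorm X x₀ F g :=
                add_le_add (ratio_le_lipNorm f p) (ratio_le_lipNorm g p)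
      neg' := by
        intro f
        simp only [lipNorm]
        congr 1
        funext p
        congr 1
        rw [toFun'_neg, Pi.neg_apply, Pi.neg_apply, neg_sub_neg, norm_sub_rev]
      eq_zero_of_map_eq_zero' := by
        intro f hf
        have hzero : ∀ x : X, toFun' f x = 0 := by
          intro x
          rcases eq_or_ne x x₀ with h | h
          · rw [h]; exact apply_base f
          · have hf' : lipNorm X x₀ F f = 0 := hf
            have h1 := ratio_le_lipNorm (x₀ := x₀) f (x, x₀)
            rw [hf', div_le_iff₀ (dist_pos.2 h), zero_mul] at h1
            have h2 : toFun' f x - toFun' f x₀ = 0 := by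
              simpa using norm_le_zero_iff.1 h1
            have h3 := apply_base f
            rw [h3, sub_zero] at h2
            exact h2
        exact Subtype.ext (funext hzero) }

lemma lip0_norm_def (f : lip0 X x₀ F) : ‖f‖ = lipNorm X x₀ F f := rfl

instance : NormedSpace ℝ (lip0 X x₀ F) where
  norm_smul_le c f := by
    haveI : Nonempty (X × X) := nonempty_pairs x₀
    rw [lip0_norm_def, lip0_norm_def, lipNorm]
    apply ciSup_le
    intro p
    have h1 : toFun' (c • f) p.1 - toFun' (c • f) p.2 =
        c • (toFun' f p.1 - toFun' f p.2) := by
      rw [toFun'_smul, Pi.smul_apply, Pi.smul_apply, smul_sub]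
    rw [h1, norm_smul]
    rcases eq_or_ne p.1 p.2 with h | h
    · simp only [h, dist_self, div_zero]
      exact mul_nonneg (norm_nonneg c) (lipNorm_nonneg f)
    · rw [mul_div_assoc]
      exact mul_le_mul_of_nonneg_left (ratio_le_lipNorm (x₀ := x₀) f p) (norm_nonneg c)

variable (X x₀ F)

/-- Elements of `Lip₀(X, F)` as continuous maps. -/
def toCM (f : lip0 X x₀ F) : C(X, F) :=
  ⟨toFun' f, by
    obtain ⟨K, hK⟩ := exists_lip f
    exact hK.continuous⟩

/-- The compact-open topology `τ₀` on `Lip₀(X, F)`. -/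
def tau0 : TopologicalSpace (lip0 X x₀ F) :=
  TopologicalSpace.induced (toCM X x₀ F) ContinuousMap.compactOpen

/-- The set `γ(U) = ⋃ₙ (U₀ ∩ B + U₁ ∩ 2B + ⋯ + Uₙ ∩ 2ⁿB)` from the definition of the
mixed topology, where `B` is the closed unit ball of `Lip₀(X, F)`. -/
def gammaSet (U : ℕ → Set (lip0 X x₀ F)) : Set (lip0 X x₀ F) :=
  ⋃ n : ℕ, ∑ i ∈ Finset.range (n + 1), (U i ∩ {f | ‖f‖ ≤ 2 ^ i})

/-- The mixed topology `τ_γ = γ[Lip, τ₀]` on `Lip₀(X, F)`: the topology whose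
neighborhoods of a point `f` are generated by the translates by `f` of the sets `γ(U)`,
where `U` runs over all sequences of convex balanced `τ₀`-neighborhoods of zero. -/
def tauGamma : TopologicalSpace (lip0 X x₀ F) :=
  TopologicalSpace.mkOfNhds fun f =>
    ⨅ (U : ℕ → Set (lip0 X x₀ F))
      (_ : ∀ n, U n ∈ @nhds _ (tau0 X x₀ F) 0 ∧ Convex ℝ (U n) ∧ Balanced ℝ (U n)),
      Filter.principal ((f + ·) '' gammaSet X x₀ F U)

/-- A subset of `Lip₀(X, F)` is norm bounded if the Lipschitz norms of its members are
uniformly bounded. -/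
def NormBounded (B : Set (lip0 X x₀ F)) : Prop :=
  ∃ C : ℝ, ∀ f ∈ B, ‖f‖ ≤ C

/-- The locally convex topology `γτ_γ` on `Lip₀(X, F)`, generated by the seminorms
`f ↦ sup_n αₙ ‖f xₙ - f yₙ‖ / d(xₙ, yₙ)` where `(αₙ)` is a sequence of positive reals
tending to zero and `((xₙ, yₙ))` is a sequence of pairs of distinct points of `X`. -/
def gammaTauGamma : TopologicalSpace (lip0 X x₀ F) :=
  ⨅ (α : ℕ → ℝ) (z : ℕ → X × X)
    (_ : (∀ n, 0 < α n) ∧ Filter.Tendsto α Filter.atTop (nhds 0) ∧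
      ∀ n, (z n).1 ≠ (z n).2),
    TopologicalSpace.induced
      (fun f => UniformFun.ofFun fun n =>
        (α n / dist (z n).1 (z n).2) • (toFun' f (z n).1 - toFun' f (z n).2))
      inferInstance

/-- Evaluation at a point of `X`, as a linear functional on `Lip₀(X)`. -/
def evalLM (x : X) : lip0 X x₀ ℝ →ₗ[ℝ] ℝ where
  toFun f := toFun' f x
  map_add' f g := rfl
  map_smul' c f := rfl

/-- Evaluation at a point of `X`, as a continuous linear functional on `Lip₀(X)`. -/
def evalCLM (x : X) : lip0 X x₀ ℝ →L[ℝ] ℝ :=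
  LinearMap.mkContinuous (evalLM X x₀ x) (dist x x₀)
    (fun f => by
      have h0 : toFun' f x₀ = 0 := apply_base f
      have h := norm_sub_le_lipNorm (x₀ := x₀) f x x₀
      rw [h0, sub_zero] at h
      calc ‖evalLM X x₀ x f‖ ≤ lipNorm X x₀ ℝ f * dist x x₀ := h
        _ = dist x x₀ * ‖f‖ := by rw [lip0_norm_def, mul_comm])

/-- The Lipschitz-free space `F(X)`: the closed linear span of the evaluation
functionals inside the dual of `Lip₀(X)`. -/
def freeSpace : Submodule ℝ (lip0 X x₀ ℝ →L[ℝ] ℝ) :=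
  (Submodule.span ℝ (Set.range (evalCLM X x₀))).topologicalClosure

/-- The Dirac map `δ : X → F(X)`. -/
def deltaF (x : X) : freeSpace X x₀ :=
  ⟨evalCLM X x₀ x,
    Submodule.le_topologicalClosure _ (Submodule.subset_span (Set.mem_range_self x))⟩

/-- For a normed space `G`, the topology on the dual `G'` of uniform convergence on the
convex balanced compact subsets of `G` (the topology of `G'_c`). -/
def dualcTop (G : Type*) [NormedAddCommGroup G] [NormedSpace ℝ G] :
    TopologicalSpace (G →L[ℝ] ℝ) :=
  TopologicalSpace.induced
    (fun φ => UniformOnFun.ofFun {L : Set G | IsCompact L ∧ Convex ℝ L ∧ Balanced ℝ L} ⇑φ)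
    inferInstance

/-!
The sets `lipSet A L` and the sets `γ(U)` of the mixed topology generate the same filter. Given
`L n → ∞` and finite sets `A n`, let `V i` bound the Lipschitz constant on `A m` by
`L m / 2 ^ (i + 2)` for the finitely many `m` with `L m < 2 ^ (i + 2)`. A sum of elements
`uᵢ ∈ V i ∩ 2 ^ i B` then has Lipschitz constant on `A m` at most
`∑ L m / 2 ^ (i + 2) + ∑_{2 ^ (i + 2) ≤ L m} 2 ^ i ≤ L m`, so `γ(V) ⊆ lipSet A L`.

Conversely, each `U i` contains `{g | |g| ≤ ε i on K i}` with `K i` compact. Take `L n = c 2 ^ n`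
and let `A n` consist of `x₀` and finite nets of `K (k + 1)`, `k ≤ n`. For `f ∈ lipSet A L`,
the McShane extensions `G n` of `f` restricted to `A n` (replaced by `f` once `‖f‖ ≤ L n`)
telescope to `f`: `G (i + 1) - G i` has norm at most `3 c 2 ^ i ≤ 2 ^ (i + 1)` and vanishes on
a fine net of `K (i + 1)`, hence is at most `ε (i + 1)` on `K (i + 1)`.

Finally `lipSet A (L / 2) + lipSet A (L / 2) ⊆ lipSet A L`, so this filter satisfies the
neighbourhood axioms and is the neighbourhood filter of `τ_γ`.
-/

section LipOn

variable {X x₀}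

def lipOn (A : Set X) (L : ℝ) : Set (lip0 X x₀ ℝ) :=
  {f | ∀ x ∈ A, ∀ y ∈ A, |toFun' f x - toFun' f y| ≤ L * dist x y}

def lipSet (A : ℕ → Finset X) (L : ℕ → ℝ) : Set (lip0 X x₀ ℝ) :=
  ⋂ n, lipOn (A n : Set X) (L n)

lemma abs_sub_le_norm_mul_dist (f : lip0 X x₀ ℝ) (x y : X) :
    |toFun' f x - toFun' f y| ≤ ‖f‖ * dist x y := by
  simpa only [Real.norm_eq_abs, lip0_norm_def] using norm_sub_le_lipNorm f x y

lemma abs_le_norm_mul_dist (f : lip0 X x₀ ℝ) (x : X) :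
    |toFun' f x| ≤ ‖f‖ * dist x x₀ := by
  simpa only [apply_base, sub_zero] using abs_sub_le_norm_mul_dist f x x₀

lemma norm_le_of_lipschitzWith {f : lip0 X x₀ ℝ} {K : NNReal}
    (hf : LipschitzWith K (toFun' f)) : ‖f‖ ≤ K :=
  haveI := nonempty_pairs x₀
  ciSup_le (ratio_le f hf)

lemma lipOn_mono {A : Set X} {L L' : ℝ} (h : L ≤ L') :
    (lipOn A L : Set (lip0 X x₀ ℝ)) ⊆ lipOn A L' :=
  fun _ hf x hx y hy => (hf x hx y hy).trans (mul_le_mul_of_nonneg_right h dist_nonneg)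

lemma mem_lipOn_of_norm_le {A : Set X} {L : ℝ} {f : lip0 X x₀ ℝ} (hf : ‖f‖ ≤ L) :
    f ∈ lipOn A L := fun x _ y _ =>
  (abs_sub_le_norm_mul_dist f x y).trans (mul_le_mul_of_nonneg_right hf dist_nonneg)

lemma add_mem_lipOn {A : Set X} {L L' : ℝ} {f g : lip0 X x₀ ℝ} (hf : f ∈ lipOn A L)
    (hg : g ∈ lipOn A L') : f + g ∈ lipOn A (L + L') := fun x hx y hy =>
  calc |toFun' (f + g) x - toFun' (f + g) y|
      = |(toFun' f x - toFun' f y) + (toFun' g x - toFun' g y)| := by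
        rw [toFun'_add, Pi.add_apply, Pi.add_apply, add_sub_add_comm]
    _ ≤ L * dist x y + L' * dist x y :=
        (abs_add_le _ _).trans (add_le_add (hf x hx y hy) (hg x hx y hy))
    _ = (L + L') * dist x y := (add_mul _ _ _).symm

lemma finsetSum_lipOn_subset {ι : Type*} (s : Finset ι) (A : Set X) (L : ι → ℝ) :
    ∑ i ∈ s, (lipOn A (L i) : Set (lip0 X x₀ ℝ)) ⊆ lipOn A (∑ i ∈ s, L i) := by
  classical
  induction s using Finset.induction_on with
  | empty => simp [lipOn, toFun'_zero]
  | insert i s hi ih =>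
    rw [Finset.sum_insert hi, Finset.sum_insert hi]
    rintro _ ⟨f, hf, g, hg, rfl⟩
    exact add_mem_lipOn hf (ih hg)

lemma convex_lipOn (A : Set X) (L : ℝ) : Convex ℝ (lipOn A L : Set (lip0 X x₀ ℝ)) := by
  intro f hf g hg a b ha hb hab x hx y hy
  calc |toFun' (a • f + b • g) x - toFun' (a • f + b • g) y|
      = |a * (toFun' f x - toFun' f y) + b * (toFun' g x - toFun' g y)| := by
        simp only [toFun'_add, toFun'_smul, Pi.add_apply, Pi.smul_apply, smul_eq_mul]
        ring_nf
    _ ≤ a * (L * dist x y) + b * (L * dist x y) := by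
        refine (abs_add_le _ _).trans (add_le_add ?_ ?_) <;>
          rw [abs_mul, abs_of_nonneg ‹_›] <;> gcongr
        exacts [hf x hx y hy, hg x hx y hy]
    _ = L * dist x y := by rw [← add_mul, hab, one_mul]

lemma balanced_lipOn (A : Set X) (L : ℝ) : Balanced ℝ (lipOn A L : Set (lip0 X x₀ ℝ)) := by
  rintro a ha _ ⟨f, hf, rfl⟩ x hx y hy
  calc |toFun' (a • f) x - toFun' (a • f) y| = ‖a‖ * |toFun' f x - toFun' f y| := by
        rw [toFun'_smul, Pi.smul_apply, Pi.smul_apply, ← smul_sub, smul_eq_mul, abs_mul,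
          Real.norm_eq_abs]
    _ ≤ 1 * (L * dist x y) := mul_le_mul ha (hf x hx y hy) (abs_nonneg _) zero_le_one
    _ = L * dist x y := one_mul _

lemma add_mem_lipSet {A : ℕ → Finset X} {L L' : ℕ → ℝ} {f g : lip0 X x₀ ℝ}
    (hf : f ∈ lipSet A L) (hg : g ∈ lipSet A L') : f + g ∈ lipSet A fun n => L n + L' n :=
  Set.mem_iInter.2 fun n => add_mem_lipOn (Set.mem_iInter.1 hf n) (Set.mem_iInter.1 hg n)

lemma zero_mem_lipSet (A : ℕ → Finset X) {L : ℕ → ℝ} (hL : ∀ n, 0 ≤ L n) :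
    (0 : lip0 X x₀ ℝ) ∈ lipSet A L :=
  Set.mem_iInter.2 fun n => mem_lipOn_of_norm_le (norm_zero.trans_le (hL n))

end LipOn

section Tau0

variable {X x₀ F}

lemma continuous_apply_tau0 (x : X) :
    Continuous[tau0 X x₀ F, _] fun f : lip0 X x₀ F => toFun' f x :=
  @Continuous.comp _ _ _ (tau0 X x₀ F) _ _ _ _ (continuous_eval_const x) continuous_induced_dom

lemma lipOn_mem_nhds_tau0 {A : Set X} (hA : A.Finite) {L : ℝ} (hL : 0 < L) :
    lipOn A L ∈ @nhds _ (tau0 X x₀ ℝ) 0 := by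
  let _ := tau0 X x₀ ℝ
  have hA' : lipOn A L = ⋂ x ∈ A, ⋂ y ∈ A,
      {f : lip0 X x₀ ℝ | |toFun' f x - toFun' f y| ≤ L * dist x y} := by
    ext; simp [lipOn]
  rw [hA']
  refine (biInter_mem hA).2 fun x _ => (biInter_mem hA).2 fun y _ => ?_
  rcases eq_or_ne x y with rfl | hxy
  · simp
  · have hcont := (continuous_apply_tau0 (x₀ := x₀) (F := ℝ) x).sub (continuous_apply_tau0 y)
    refine mem_of_superset (hcont.continuousAt.preimage_mem_nhds
      (Metric.closedBall_mem_nhds _ (mul_pos hL (dist_pos.2 hxy)))) fun f hf => ?_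
    simpa [toFun'_zero, Real.dist_eq] using hf

lemma exists_isCompact_subset_of_mem_nhds_tau0 {U : Set (lip0 X x₀ ℝ)}
    (hU : U ∈ @nhds _ (tau0 X x₀ ℝ) 0) :
    ∃ K : Set X, ∃ ε : ℝ, IsCompact K ∧ 0 < ε ∧
      {g | ∀ x ∈ K, |toFun' g x| ≤ ε} ⊆ U := by
  obtain ⟨t, ht, htU⟩ := (mem_nhds_induced _ _ _).1 hU
  obtain ⟨⟨K, ε⟩, ⟨hK, hε⟩, hKt⟩ := (nhds_basis_uniformity'
    Metric.uniformity_basis_dist_le.compactConvergenceUniformity).mem_iff.1 ht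
  refine ⟨K, ε, hK, hε, fun g hg => htU (hKt fun x hx => ?_)⟩
  simpa [toCM, toFun'_zero, Real.dist_eq, abs_sub_comm] using hg x hx

end Tau0

def IsAbsConvexNhdsSeq (U : ℕ → Set (lip0 X x₀ F)) : Prop :=
  ∀ n, U n ∈ @nhds _ (tau0 X x₀ F) 0 ∧ Convex ℝ (U n) ∧ Balanced ℝ (U n)

section GammaSet

variable {X x₀ F}

lemma gammaSet_mono {U V : ℕ → Set (lip0 X x₀ F)} (h : ∀ n, U n ⊆ V n) :
    gammaSet X x₀ F U ⊆ gammaSet X x₀ F V :=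
  Set.iUnion_mono fun _ => Set.finsetSum_subset_finsetSum _ _ _ fun i _ =>
    Set.inter_subset_inter_left _ (h i)

lemma mem_gammaSet_of_sub_mem {U : ℕ → Set (lip0 X x₀ F)} {G : ℕ → lip0 X x₀ F}
    {n : ℕ} (h₀ : G 0 ∈ U 0 ∩ {f | ‖f‖ ≤ 1})
    (hsucc : ∀ i < n, G (i + 1) - G i ∈ U (i + 1) ∩ {f | ‖f‖ ≤ 2 ^ (i + 1)}) :
    G n ∈ gammaSet X x₀ F U := by
  let u : ℕ → lip0 X x₀ F
    | 0 => G 0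
    | i + 1 => G (i + 1) - G i
  have hsum : ∑ i ∈ Finset.range (n + 1), u i = G n := by
    rw [Finset.sum_range_succ', Finset.sum_range_sub]
    exact sub_add_cancel _ _
  refine Set.mem_iUnion.2 ⟨n, hsum ▸ Set.finsetSum_mem_finsetSum _ _ _ fun i hi => ?_⟩
  rcases i with _ | i
  · simpa using h₀
  · exact hsucc i (by simpa using hi)

end GammaSet

lemma sum_ite_pow_two_le {L : ℝ} (hL : 0 ≤ L) (n : ℕ) :
    ∑ i ∈ Finset.range n,
      (if L < 2 ^ (i + 2) then L / 2 ^ (i + 2) else (2 : ℝ) ^ i) ≤ L := by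
  classical
  rw [Finset.sum_ite]
  have hsmall :
      ∑ i ∈ (Finset.range n).filter (fun i => L < 2 ^ (i + 2)), L / 2 ^ (i + 2) ≤ L / 2 :=
    calc _ ≤ ∑ i ∈ Finset.range n, L / 2 ^ (i + 2) :=
          Finset.sum_le_sum_of_subset_of_nonneg (Finset.filter_subset _ _)
            fun i _ _ => by positivity
      _ = L / 4 * ∑ i ∈ Finset.range n, (1 / 2 : ℝ) ^ i := by
          rw [Finset.mul_sum]; congr 1; ext i; rw [one_div, inv_pow, pow_add]; ring
      _ ≤ L / 4 * 2 := by gcongr; exact sum_geometric_two_le n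
      _ = L / 2 := by ring
  have hlarge :
      ∑ i ∈ (Finset.range n).filter (fun i => ¬ L < 2 ^ (i + 2)), (2 : ℝ) ^ i ≤ L / 2 := by
    set T := (Finset.range n).filter (fun i => ¬ L < 2 ^ (i + 2))
    rcases T.eq_empty_or_nonempty with hT | hT
    · rw [hT, Finset.sum_empty]; positivity
    · have hmax : (2 : ℝ) ^ (T.max' hT + 2) ≤ L :=
        not_lt.1 (Finset.mem_filter.1 (T.max'_mem hT)).2
      have hlt : ∑ i ∈ T, 2 ^ i < 2 ^ (T.max' hT + 1) :=
        Nat.geomSum_lt le_rfl fun i hi => Nat.lt_succ_of_le (T.le_max' i hi)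
      calc ∑ i ∈ T, (2 : ℝ) ^ i ≤ 2 ^ (T.max' hT + 1) := by exact_mod_cast hlt.le
        _ ≤ L / 2 := by rw [le_div_iff₀ two_pos, ← pow_succ]; exact hmax
  linarith

section Comparison

variable {X x₀}

theorem exists_gammaSet_subset_lipSet (A : ℕ → Finset X) {L : ℕ → ℝ} (hL : ∀ n, 0 < L n)
    (hL_top : Tendsto L atTop atTop) :
    ∃ V, IsAbsConvexNhdsSeq X x₀ ℝ V ∧ gammaSet X x₀ ℝ V ⊆ lipSet A L := by
  have hfin : ∀ i, {m | L m < 2 ^ (i + 2)}.Finite := fun i => by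
    simpa [← Nat.cofinite_eq_atTop] using hL_top.eventually_ge_atTop (2 ^ (i + 2))
  let V : ℕ → Set (lip0 X x₀ ℝ) := fun i =>
    ⋂ m ∈ {m | L m < 2 ^ (i + 2)}, lipOn (A m) (L m / 2 ^ (i + 2))
  refine ⟨V, fun i => ⟨(biInter_mem (hfin i)).2 fun m _ =>
      lipOn_mem_nhds_tau0 (A m).finite_toSet (div_pos (hL m) (by positivity)),
    convex_iInter₂ fun m _ => convex_lipOn _ _,
    balanced_iInter₂ fun m _ => balanced_lipOn _ _⟩, ?_⟩
  rintro g ⟨_, ⟨n, rfl⟩, hg⟩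
  refine Set.mem_iInter.2 fun m => ?_
  have hterm : ∀ i ∈ Finset.range (n + 1), V i ∩ {f | ‖f‖ ≤ 2 ^ i} ⊆
      lipOn (A m) (if L m < 2 ^ (i + 2) then L m / 2 ^ (i + 2) else 2 ^ i) := by
    rintro i - f ⟨hfV, hfn⟩
    split_ifs with h
    · exact Set.mem_iInter₂.1 hfV m h
    · exact mem_lipOn_of_norm_le hfn
  exact lipOn_mono (sum_ite_pow_two_le (hL m).le _)
    (finsetSum_lipOn_subset _ _ _ (Set.finsetSum_subset_finsetSum _ _ _ hterm hg))

lemma exists_extension_of_mem_lipOn {A : Set X} (hA : x₀ ∈ A) {L : ℝ} (hL : 0 ≤ L)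
    {f : lip0 X x₀ ℝ} (hf : f ∈ lipOn A L) :
    ∃ g : lip0 X x₀ ℝ, ‖g‖ ≤ L ∧ Set.EqOn (toFun' g) (toFun' f) A := by
  have hlip : LipschitzOnWith L.toNNReal (toFun' f) A :=
    LipschitzOnWith.of_dist_le_mul fun x hx y hy => by
      rw [Real.dist_eq, Real.coe_toNNReal _ hL]; exact hf x hx y hy
  obtain ⟨g, hg, hfg⟩ := hlip.extend_real
  have hg0 : g x₀ = 0 := (hfg hA).symm.trans (apply_base f)
  let g' : lip0 X x₀ ℝ := ⟨g, ⟨_, hg⟩, hg0⟩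
  refine ⟨g', ?_, hfg.symm⟩
  simpa only [Real.coe_toNNReal _ hL] using norm_le_of_lipschitzWith (f := g') hg

lemma exists_seq_eqOn_of_mem_lipOn {A : ℕ → Set X} (hA : ∀ n, x₀ ∈ A n) {L : ℕ → ℝ}
    (hL : ∀ n, 0 ≤ L n) {f : lip0 X x₀ ℝ} (hf : ∀ n, f ∈ lipOn (A n) (L n)) :
    ∃ G : ℕ → lip0 X x₀ ℝ, (∀ n, ‖G n‖ ≤ L n) ∧
      (∀ n, Set.EqOn (toFun' (G n)) (toFun' f) (A n)) ∧ ∀ n, ‖f‖ ≤ L n → G n = f := by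
  choose H hHL hHf using fun n => exists_extension_of_mem_lipOn (hA n) (hL n) (hf n)
  refine ⟨fun n => if ‖f‖ ≤ L n then f else H n, fun n => ?_, fun n => ?_,
    fun n hn => if_pos hn⟩
  · dsimp only
    split_ifs with h
    exacts [h, hHL n]
  · dsimp only
    split_ifs
    exacts [Set.eqOn_refl _ _, hHf n]

lemma abs_le_of_eqOn_zero_of_subset_ball {g : lip0 X x₀ ℝ} {L δ : ℝ} (hg : ‖g‖ ≤ L)
    {N K : Set X} (hN : ∀ y ∈ N, toFun' g y = 0) (hK : K ⊆ ⋃ y ∈ N, Metric.ball y δ) :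
    ∀ x ∈ K, |toFun' g x| ≤ L * δ := by
  intro x hx
  obtain ⟨y, hy, hxy⟩ := Set.mem_iUnion₂.1 (hK hx)
  calc |toFun' g x| = |toFun' g x - toFun' g y| := by rw [hN y hy, sub_zero]
    _ ≤ ‖g‖ * dist x y := abs_sub_le_norm_mul_dist g x y
    _ ≤ L * δ := mul_le_mul hg (Metric.mem_ball.1 hxy).le dist_nonneg ((norm_nonneg g).trans hg)

lemma mem_gammaSet_of_eqOn_nets {U : ℕ → Set (lip0 X x₀ ℝ)} {K : ℕ → Set X}
    {ε : ℕ → ℝ} (hKU : ∀ n, {g | ∀ x ∈ K n, |toFun' g x| ≤ ε n} ⊆ U n) {c D : ℝ}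
    (hc : 0 < c) (hc_half : c ≤ 1 / 2) (hcD : c * D ≤ ε 0)
    (hKD : K 0 ⊆ Metric.closedBall x₀ D) {N : ℕ → Set X}
    (hN : ∀ n, K (n + 1) ⊆ ⋃ y ∈ N n, Metric.ball y (ε (n + 1) / (4 * c * 2 ^ n)))
    {G : ℕ → lip0 X x₀ ℝ} (hG : ∀ n, ‖G n‖ ≤ c * 2 ^ n)
    (hGN : ∀ n, ∀ y ∈ N n, toFun' (G (n + 1)) y = toFun' (G n) y) (n : ℕ) :
    G n ∈ gammaSet X x₀ ℝ U := by
  have hstep : ∀ i, ‖G (i + 1) - G i‖ ≤ 3 * c * 2 ^ i := fun i =>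
    calc _ ≤ c * 2 ^ (i + 1) + c * 2 ^ i := (norm_sub_le _ _).trans (add_le_add (hG _) (hG _))
      _ = 3 * c * 2 ^ i := by ring
  refine mem_gammaSet_of_sub_mem ⟨hKU 0 fun x hx => ?_, ?_⟩ fun i _ => ⟨hKU (i + 1) ?_, ?_⟩
  · calc |toFun' (G 0) x| ≤ ‖G 0‖ * dist x x₀ := abs_le_norm_mul_dist _ x
      _ ≤ c * D := mul_le_mul (by simpa using hG 0) (hKD hx) dist_nonneg hc.le
      _ ≤ ε 0 := hcD
  · exact (hG 0).trans (by linarith [pow_zero (2 : ℝ)])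
  · have hvanish : ∀ y ∈ N i, toFun' (G (i + 1) - G i) y = 0 := fun y hy =>
      sub_eq_zero.2 (hGN i y hy)
    intro x hx
    calc |toFun' (G (i + 1) - G i) x| ≤ 4 * c * 2 ^ i * (ε (i + 1) / (4 * c * 2 ^ i)) :=
          abs_le_of_eqOn_zero_of_subset_ball ((hstep i).trans (by gcongr; norm_num))
            hvanish (hN i) x hx
      _ = ε (i + 1) := mul_div_cancel₀ _ (by positivity)
  · exact (hstep i).trans (by rw [pow_succ]; nlinarith [pow_pos (two_pos (α := ℝ)) i])

theorem exists_lipSet_subset_gammaSet {U : ℕ → Set (lip0 X x₀ ℝ)}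
    (hU : ∀ n, U n ∈ @nhds _ (tau0 X x₀ ℝ) 0) :
    ∃ A : ℕ → Finset X, ∃ L : ℕ → ℝ, ((∀ n, 0 < L n) ∧ Tendsto L atTop atTop) ∧
      lipSet A L ⊆ gammaSet X x₀ ℝ U := by
  classical
  choose K ε hK hε hKU using fun n => exists_isCompact_subset_of_mem_nhds_tau0 (hU n)
  obtain ⟨D, hD, hKD⟩ := (hK 0).isBounded.subset_closedBall_lt 0 x₀
  set c := min (1 / 2 : ℝ) (ε 0 / D)
  have hc : 0 < c := lt_min one_half_pos (div_pos (hε 0) hD)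
  have hL_top : Tendsto (fun n => c * 2 ^ n) atTop atTop :=
    (tendsto_pow_atTop_atTop_of_one_lt one_lt_two).const_mul_atTop hc
  choose N _ hN using fun n => (hK (n + 1)).elim_nhds_subcover
    (fun y => Metric.ball y (ε (n + 1) / (4 * c * 2 ^ n)))
    (fun y _ => Metric.ball_mem_nhds y (div_pos (hε (n + 1)) (by positivity)))
  let A : ℕ → Finset X := fun n => insert x₀ ((Finset.range (n + 1)).biUnion N)
  have hNA : ∀ n, (N n : Set X) ⊆ A n ∩ A (n + 1) := fun n y hy => by
    simp only [A, Finset.coe_insert, Finset.coe_biUnion, Finset.coe_range, Set.mem_inter_iff,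
      Set.mem_insert_iff, Set.mem_iUnion, Set.mem_Iio]
    exact ⟨.inr ⟨n, by omega, hy⟩, .inr ⟨n, by omega, hy⟩⟩
  refine ⟨A, fun n => c * 2 ^ n, ⟨fun n => by positivity, hL_top⟩, fun f hf => ?_⟩
  obtain ⟨G, hGL, hGf, hG⟩ := exists_seq_eqOn_of_mem_lipOn
    (fun n => Finset.mem_insert_self x₀ _) (fun n => by positivity) (Set.mem_iInter.1 hf)
  obtain ⟨n, hn⟩ := (hL_top.eventually_ge_atTop ‖f‖).exists
  rw [← hG n hn]
  exact mem_gammaSet_of_eqOn_nets hKU hc (min_le_left _ _) ((le_div_iff₀ hD).1 (min_le_right _ _))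
    hKD hN hGL (fun i y hy => (hGf (i + 1) (hNA i hy).2).trans (hGf i (hNA i hy).1).symm) n

end Comparison

section Topology

variable {X x₀ F}

def gammaNhds (f : lip0 X x₀ F) : Filter (lip0 X x₀ F) :=
  ⨅ (U) (_ : IsAbsConvexNhdsSeq X x₀ F U), 𝓟 ((f + ·) '' gammaSet X x₀ F U)

lemma hasBasis_gammaNhds (f : lip0 X x₀ F) :
    (gammaNhds f).HasBasis (IsAbsConvexNhdsSeq X x₀ F) fun U => (f + ·) '' gammaSet X x₀ F U :=
  hasBasis_biInf_principal'
    (fun U hU V hV => ⟨fun n => U n ∩ V n,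
      fun n => ⟨inter_mem (hU n).1 (hV n).1, (hU n).2.1.inter (hV n).2.1,
        (hU n).2.2.inter (hV n).2.2⟩,
      image_mono (gammaSet_mono fun _ => inter_subset_left),
      image_mono (gammaSet_mono fun _ => inter_subset_right)⟩)
    ⟨fun _ => univ, fun _ => ⟨univ_mem, convex_univ, balanced_univ⟩⟩

lemma hasBasis_gammaNhds_lipSet (f : lip0 X x₀ ℝ) :
    (gammaNhds f).HasBasis
      (fun p : (ℕ → Finset X) × (ℕ → ℝ) =>
        (∀ n, 0 < p.2 n) ∧ Tendsto p.2 atTop atTop)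
      fun p => (f + ·) '' lipSet p.1 p.2 :=
  (hasBasis_gammaNhds f).to_hasBasis
    (fun _ hU =>
      let ⟨A, L, hL, hsub⟩ := exists_lipSet_subset_gammaSet fun n => (hU n).1
      ⟨(A, L), hL, image_mono hsub⟩)
    (fun p hp =>
      let ⟨V, hV, hsub⟩ := exists_gammaSet_subset_lipSet p.1 hp.1 hp.2
      ⟨V, hV, image_mono hsub⟩)

theorem hasBasis_nhds_tauGamma (f : lip0 X x₀ ℝ) :
    (@nhds _ (tauGamma X x₀ ℝ) f).HasBasis
      (fun p : (ℕ → Finset X) × (ℕ → ℝ) =>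
        (∀ n, 0 < p.2 n) ∧ Tendsto p.2 atTop atTop)
      fun p => (f + ·) '' lipSet p.1 p.2 := by
  have hnhds : @nhds _ (tauGamma X x₀ ℝ) f = gammaNhds f := by
    refine TopologicalSpace.nhds_mkOfNhds_of_hasBasis hasBasis_gammaNhds_lipSet
      (fun f p hp => ⟨0, zero_mem_lipSet p.1 fun n => (hp.1 n).le, add_zero f⟩) ?_ f
    intro f p hp
    have hhalf : (∀ n, 0 < p.2 n / 2) ∧ Tendsto (fun n => p.2 n / 2) atTop atTop :=
      ⟨fun n => half_pos (hp.1 n), hp.2.atTop_div_const two_pos⟩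
    filter_upwards [(hasBasis_gammaNhds_lipSet f).mem_of_mem (i := (p.1, _)) hhalf]
    rintro _ ⟨g, hg, rfl⟩
    refine mem_of_superset
      ((hasBasis_gammaNhds_lipSet (f + g)).mem_of_mem (i := (p.1, _)) hhalf) ?_
    rintro _ ⟨h, hh, rfl⟩
    exact ⟨g + h, by simpa only [add_halves] using add_mem_lipSet hg hh, (add_assoc f g h).symm⟩
  exact hnhds ▸ hasBasis_gammaNhds_lipSet f

end Topology

/-- The sets `U = ⋂ₙ {f ∈ Lip₀(X) : Lip_{Fₙ}(f) ≤ λₙ}`, where `(Fₙ)`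
is a sequence of finite subsets of `X` and `(λₙ)` is a sequence of positive reals
tending to `∞`, form a base of neighborhoods of zero in `(Lip₀(X), τ_γ)`. -/
theorem stmt10 (X : Type*) [MetricSpace X] (x₀ : X) :
    (@nhds _ (tauGamma X x₀ ℝ) 0).HasBasis
      (fun p : (ℕ → Finset X) × (ℕ → ℝ) =>
        (∀ n, 0 < p.2 n) ∧ Filter.Tendsto p.2 Filter.atTop Filter.atTop)
      (fun p => ⋂ n : ℕ,
        {f : lip0 X x₀ ℝ | ∀ x ∈ p.1 n, ∀ y ∈ p.1 n,
          |toFun' f x - toFun' f y| ≤ p.2 n * dist x y}) := by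
  have h := hasBasis_nhds_tauGamma (0 : lip0 X x₀ ℝ)
  simp only [zero_add, Set.image_id'] at h
  exact h

end LipApprox
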